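/- arXiv:2409.13518 — 8 statements merged into one kernel-verified Lean document; each statement's English description precedes it below -/
import Mathlib

section
/- Let A be a symmetric real n×n matrix with eigenvalue λ and corresponding eigenvector x. Then the 2n×2n block matrix M = [[A, I],[I, 0]] has eigenvalues μ = (λ + √(λ²+4))/2 and ν = (λ − √(λ²+4))/2, with corresponding eigenvectors (x, (2/(λ+√(λ²+4)))·x) and (x, (2/(λ−√(λ²+4)))·x) respectively. -/
/-!
If `A x = λ x`, then `(x, μ⁻¹ x)` is an eigenvector of `[[A, I], [I, 0]]` for `μ` exactly when
`λ + μ⁻¹ = μ`, i.e. when `μ² = λ μ + 1`; the two roots of this quadratic are `(λ ± √(λ² + 4)) / 2`,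
and `μ⁻¹ = 2 / (λ ± √(λ² + 4))`.
-/

open Matrix

theorem fromBlocks_one_one_zero_mulVec_sumElim_inv_smul {K m : Type*} [Field K] [Fintype m]
    [DecidableEq m] (A : Matrix m m K) {lam μ : K} {x : m → K} (heig : A *ᵥ x = lam • x)
    (hμ : μ ^ 2 = lam * μ + 1) :
    fromBlocks A 1 1 0 *ᵥ Sum.elim x (μ⁻¹ • x) = μ • Sum.elim x (μ⁻¹ • x) := by
  have hμ0 : μ ≠ 0 := by rintro rfl; simp at hμ
  have hμinv : lam + μ⁻¹ = μ := by field_simp; linear_combination -hμ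
  rw [fromBlocks_mulVec]
  ext (i | i)
  · simp [heig, ← add_smul, hμinv]
  · simp [hμ0]

theorem sq_half_add_eq_mul_add_one {K : Type*} [Field K] [NeZero (2 : K)] {lam s : K}
    (hs : s ^ 2 = lam ^ 2 + 4) : ((lam + s) / 2) ^ 2 = lam * ((lam + s) / 2) + 1 := by
  field_simp
  linear_combination hs

theorem stmt_4_general {n : ℕ} (A : Matrix (Fin n) (Fin n) ℝ)
    (lam : ℝ) (x : Fin n → ℝ) (heig : A.mulVec x = lam • x) :
    (Matrix.fromBlocks A 1 1 0).mulVec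
        (Sum.elim x ((2 / (lam + Real.sqrt (lam ^ 2 + 4))) • x)) =
      ((lam + Real.sqrt (lam ^ 2 + 4)) / 2) •
        Sum.elim x ((2 / (lam + Real.sqrt (lam ^ 2 + 4))) • x) ∧
    (Matrix.fromBlocks A 1 1 0).mulVec
        (Sum.elim x ((2 / (lam - Real.sqrt (lam ^ 2 + 4))) • x)) =
      ((lam - Real.sqrt (lam ^ 2 + 4)) / 2) •
        Sum.elim x ((2 / (lam - Real.sqrt (lam ^ 2 + 4))) • x) := by
  have hs : Real.sqrt (lam ^ 2 + 4) ^ 2 = lam ^ 2 + 4 := Real.sq_sqrt (by positivity)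
  have hs' : (-Real.sqrt (lam ^ 2 + 4)) ^ 2 = lam ^ 2 + 4 := by rwa [neg_sq]
  constructor
  · simpa only [inv_div] using
      fromBlocks_one_one_zero_mulVec_sumElim_inv_smul A heig (sq_half_add_eq_mul_add_one hs)
  · simpa only [inv_div, ← sub_eq_add_neg] using
      fromBlocks_one_one_zero_mulVec_sumElim_inv_smul A heig (sq_half_add_eq_mul_add_one hs')

open Matrix in
/-- Eigenvalues/eigenvectors of the corona block matrix `[[A, I],[I, 0]]` arising from
an eigenpair `(lam, x)` of the symmetric matrix `A`. -/
theorem stmt_4 {n : ℕ} (A : Matrix (Fin n) (Fin n) ℝ) (hA : A.transpose = A)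
    (lam : ℝ) (x : Fin n → ℝ) (hx : x ≠ 0) (heig : A.mulVec x = lam • x) :
    (Matrix.fromBlocks A 1 1 0).mulVec
        (Sum.elim x ((2 / (lam + Real.sqrt (lam ^ 2 + 4))) • x)) =
      ((lam + Real.sqrt (lam ^ 2 + 4)) / 2) •
        Sum.elim x ((2 / (lam + Real.sqrt (lam ^ 2 + 4))) • x) ∧
    (Matrix.fromBlocks A 1 1 0).mulVec
        (Sum.elim x ((2 / (lam - Real.sqrt (lam ^ 2 + 4))) • x)) =
      ((lam - Real.sqrt (lam ^ 2 + 4)) / 2) •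
        Sum.elim x ((2 / (lam - Real.sqrt (lam ^ 2 + 4))) • x) :=
  stmt_4_general A lam x heig
end

section
/- If G is a graph on n vertices with (multiset) spectrum {λ₁,…,λₙ}, then the corona graph of G has spectrum {(λᵢ ± √(λᵢ²+4))/2 : 1 ≤ i ≤ n}, counted with multiplicity (2n eigenvalues in total). -/
open Polynomial Matrix

/-- charpoly is invariant under two-sided conjugation by mutually inverse matrices. -/
lemma my_charpoly_conj {m : Type*} [Fintype m] [DecidableEq m] (P M Q : Matrix m m ℝ)
    (hPQ : P * Q = 1) : (P * M * Q).charpoly = M.charpoly := by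
  have h1 : (Polynomial.C).mapMatrix P * (Polynomial.C).mapMatrix Q = 1 := by
    rw [← _root_.map_mul, hPQ, _root_.map_one]
  have hchar : charmatrix (P * M * Q) =
      (Polynomial.C).mapMatrix P * charmatrix M * (Polynomial.C).mapMatrix Q := by
    rw [charmatrix, charmatrix, mul_sub, sub_mul]
    congr 1
    · rw [scalar_apply, ← Matrix.smul_eq_mul_diagonal, smul_mul_assoc, h1,
        Matrix.smul_one_eq_diagonal]
    · rw [_root_.map_mul, _root_.map_mul]
  rw [Matrix.charpoly, hchar, det_mul, det_mul, mul_right_comm, ← det_mul, h1, det_one,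
    one_mul, Matrix.charpoly]

def myEquiv (n : ℕ) : Fin 2 × Fin n ≃ Fin n ⊕ Fin n where
  toFun p := if p.1 = 0 then Sum.inl p.2 else Sum.inr p.2
  invFun s := Sum.elim (fun i => (0, i)) (fun i => (1, i)) s
  left_inv := by rintro ⟨x, i⟩; fin_cases x <;> simp
  right_inv := by rintro (i | i) <;> simp

lemma det_fromBlocks_diagonal {n : ℕ} (a b c d : Fin n → ℝ[X]) :
    (Matrix.fromBlocks (diagonal a) (diagonal b) (diagonal c) (diagonal d)).det
      = ∏ i, (a i * d i - b i * c i) := by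
  have h : (Matrix.fromBlocks (diagonal a) (diagonal b) (diagonal c) (diagonal d)).submatrix
      (myEquiv n) (myEquiv n) = Matrix.blockDiagonal (fun i => !![a i, b i; c i, d i]) := by
    ext ⟨x, i⟩ ⟨y, j⟩
    fin_cases x <;> fin_cases y <;>
      simp [myEquiv, Matrix.blockDiagonal_apply, Matrix.diagonal_apply]
  rw [← Matrix.det_submatrix_equiv_self (myEquiv n), h, Matrix.det_blockDiagonal]
  simp [Matrix.det_fin_two_of]

lemma charmatrix_diag {n : ℕ} (d : Fin n → ℝ) :
    charmatrix (diagonal d) = diagonal (fun i => (X : ℝ[X]) - C (d i)) := by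
  rw [charmatrix, scalar_apply, RingHom.mapMatrix_apply, Matrix.diagonal_map (by simp),
    ← Matrix.diagonal_sub]

lemma charpoly_diag {n : ℕ} (d : Fin n → ℝ) :
    (diagonal d).charpoly = ∏ i, ((X : ℝ[X]) - C (d i)) := by
  rw [Matrix.charpoly, charmatrix_diag, Matrix.det_diagonal]

lemma charpoly_corona_diag {n : ℕ} (d : Fin n → ℝ) :
    (Matrix.fromBlocks (diagonal d) (1 : Matrix (Fin n) (Fin n) ℝ) 1 0).charpoly =
      ∏ i, ((X : ℝ[X]) ^ 2 - C (d i) * X - 1) := by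
  have hc : charmatrix (Matrix.fromBlocks (diagonal d) (1 : Matrix (Fin n) (Fin n) ℝ) 1 0) =
      Matrix.fromBlocks (diagonal fun i => (X : ℝ[X]) - C (d i))
        (diagonal fun _ => (-1 : ℝ[X])) (diagonal fun _ => (-1 : ℝ[X]))
        (diagonal fun _ => (X : ℝ[X])) := by
    rw [charmatrix_fromBlocks, charmatrix_diag, charmatrix, _root_.map_zero, sub_zero,
      scalar_apply, Matrix.map_one _ (by simp) (by simp), ← Matrix.diagonal_one,
      Matrix.diagonal_neg]
  rw [Matrix.charpoly, hc, det_fromBlocks_diagonal]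
  apply Finset.prod_congr rfl
  intro i _
  ring

lemma quad_factor (lam : ℝ) :
    (X ^ 2 - C lam * X - 1 : ℝ[X]) =
      (X - C ((lam + Real.sqrt (lam ^ 2 + 4)) / 2)) *
      (X - C ((lam - Real.sqrt (lam ^ 2 + 4)) / 2)) := by
  set s := Real.sqrt (lam ^ 2 + 4) with hs
  have hsq : s ^ 2 = lam ^ 2 + 4 := Real.sq_sqrt (by positivity)
  have hadd : (lam + s) / 2 + (lam - s) / 2 = lam := by ring
  have hmul : (lam + s) / 2 * ((lam - s) / 2) = -1 := by
    have h4 : (lam + s) / 2 * ((lam - s) / 2) = (lam ^ 2 - s ^ 2) / 4 := by ring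
    rw [h4, hsq]; ring
  have hexp : (X - C ((lam + s) / 2)) * (X - C ((lam - s) / 2)) =
      X ^ 2 - (C ((lam + s) / 2) + C ((lam - s) / 2)) * X
        + C ((lam + s) / 2) * C ((lam - s) / 2) := by ring
  rw [hexp, ← C_add, hadd, ← C_mul, hmul]
  simp
  ring

/-- The spectrum (multiset of characteristic roots) of the corona graph of `G` is
`{(λᵢ ± √(λᵢ²+4))/2}` over the spectrum `{λᵢ}` of `G`. -/
theorem stmt_5 {n : ℕ} (G : SimpleGraph (Fin n)) [DecidableRel G.Adj] :
    (Matrix.fromBlocks (G.adjMatrix ℝ) (1 : Matrix (Fin n) (Fin n) ℝ) (1 : Matrix (Fin n) (Fin n) ℝ) (0 : Matrix (Fin n) (Fin n) ℝ)).charpoly.roots =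
      (G.adjMatrix ℝ).charpoly.roots.bind (fun lam =>
        ((lam + Real.sqrt (lam ^ 2 + 4)) / 2) ::ₘ
        ((lam - Real.sqrt (lam ^ 2 + 4)) / 2) ::ₘ 0) := by
  set A := G.adjMatrix ℝ with hAdef
  have hA : A.IsHermitian := by
    rw [Matrix.IsHermitian, Matrix.conjTranspose_eq_transpose_of_trivial]
    exact G.isSymm_adjMatrix
  set V : Matrix (Fin n) (Fin n) ℝ := (hA.eigenvectorUnitary : Matrix (Fin n) (Fin n) ℝ)
    with hVdef
  set W : Matrix (Fin n) (Fin n) ℝ := star V with hWdef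
  have hVW : V * W = 1 := Matrix.mem_unitaryGroup_iff.mp (hA.eigenvectorUnitary).2
  set ev : Fin n → ℝ := hA.eigenvalues with hevdef
  have hd : (RCLike.ofReal ∘ hA.eigenvalues : Fin n → ℝ) = ev := by
    funext i; simp [RCLike.ofReal_real_eq_id]; rfl
  have spectral : A = V * diagonal ev * W := by
    have := hA.spectral_theorem
    rwa [hd] at this
  -- charpoly of A
  have hcharA : A.charpoly = ∏ i, ((X : ℝ[X]) - C (ev i)) := by
    rw [spectral, my_charpoly_conj V _ W hVW, charpoly_diag]
  -- charpoly of the corona matrix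
  have hblock : Matrix.fromBlocks A 1 1 (0 : Matrix (Fin n) (Fin n) ℝ) =
      (Matrix.fromBlocks V 0 0 V) *
        (Matrix.fromBlocks (diagonal ev) (1 : Matrix (Fin n) (Fin n) ℝ) 1 0) *
        (Matrix.fromBlocks W 0 0 W) := by
    rw [Matrix.fromBlocks_multiply, Matrix.fromBlocks_multiply]
    simp [hVW, Matrix.mul_assoc]
    rw [← Matrix.mul_assoc, ← spectral]
  have hPQ : (Matrix.fromBlocks V 0 0 V) * (Matrix.fromBlocks W 0 0 W)
      = (1 : Matrix (Fin n ⊕ Fin n) (Fin n ⊕ Fin n) ℝ) := by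
    rw [Matrix.fromBlocks_multiply]
    simp [hVW, Matrix.fromBlocks_one]
  have hcharCor : (Matrix.fromBlocks A 1 1 (0 : Matrix (Fin n) (Fin n) ℝ)).charpoly =
      ∏ i, ((X : ℝ[X]) ^ 2 - C (ev i) * X - 1) := by
    rw [hblock, my_charpoly_conj _ _ _ hPQ, charpoly_corona_diag]
  -- compute the roots
  have hrootsA : A.charpoly.roots = Finset.univ.val.map ev := by
    rw [hcharA]
    have : ∏ i, ((X : ℝ[X]) - C (ev i)) =
        ((Finset.univ.val.map ev).map fun a => X - C a).prod := by
      rw [Multiset.map_map, Finset.prod_eq_multiset_prod]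
      rfl
    rw [this, Polynomial.roots_multiset_prod_X_sub_C]
  set f : ℝ → ℝ := fun lam => (lam + Real.sqrt (lam ^ 2 + 4)) / 2 with hfdef
  set g : ℝ → ℝ := fun lam => (lam - Real.sqrt (lam ^ 2 + 4)) / 2 with hgdef
  set m : Multiset ℝ := Finset.univ.val.bind (fun i => f (ev i) ::ₘ g (ev i) ::ₘ 0) with hmdef
  have hrootsCor : (Matrix.fromBlocks A 1 1 (0 : Matrix (Fin n) (Fin n) ℝ)).charpoly.roots
      = m := by
    rw [hcharCor]
    have hfac : ∏ i, ((X : ℝ[X]) ^ 2 - C (ev i) * X - 1) =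
        (m.map fun a => X - C a).prod := by
      rw [hmdef, Multiset.map_bind, Multiset.prod_bind, Finset.prod_eq_multiset_prod]
      apply congrArg
      apply Multiset.map_congr rfl
      intro i _
      simp only [Multiset.map_cons, Multiset.map_zero, Multiset.prod_cons, Multiset.prod_zero,
        mul_one]
      exact quad_factor (ev i)
    rw [hfac, Polynomial.roots_multiset_prod_X_sub_C]
  rw [hrootsCor, hrootsA, Multiset.bind_map]
end

section
/- Let A be a real symmetric n×n matrix (n ≥ 2) with rank n−1 (nullity 1). Then the adjugate matrix of A equals α·x·xᵀ, where x is a kernel vector of A (A x = 0, x ≠ 0, normalized so xᵀx = 1) and α is the product of the nonzero eigenvalues of A. -/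
open Matrix Polynomial in
lemma charpoly_conj_aux {n : ℕ} (U D : Matrix (Fin n) (Fin n) ℝ)
    (h2 : U * star U = 1) :
    (U * D * star U).charpoly = D.charpoly := by
  set φ : Matrix (Fin n) (Fin n) ℝ →+* Matrix (Fin n) (Fin n) ℝ[X] :=
    (C : ℝ →+* ℝ[X]).mapMatrix with hφ
  have key : charmatrix (U * D * star U) = φ U * charmatrix D * φ (star U) := by
    rw [charmatrix, charmatrix, mul_sub, sub_mul]
    congr 1
    · rw [mul_assoc, (Matrix.scalar_commute (X:ℝ[X]) (Commute.all _) (φ (star U))).eq,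
        ← mul_assoc, ← _root_.map_mul, h2]
      simp [hφ]
    · simp [hφ, _root_.map_mul]
  have hdet : (φ (star U)).det * (φ U).det = 1 := by
    rw [← det_mul, ← _root_.map_mul]
    rw [mul_eq_one_comm.mp h2]; simp [hφ]
  rw [Matrix.charpoly, Matrix.charpoly, key, det_mul, det_mul, mul_comm, ← mul_assoc, hdet, one_mul]

open Matrix in
lemma ker_span_aux {n : ℕ} (A : Matrix (Fin n) (Fin n) ℝ) (hn : 1 ≤ n)
    (hrank : A.rank = n - 1) (x : Fin n → ℝ) (hker : A.mulVec x = 0) (hx : x ≠ 0)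
    (y : Fin n → ℝ) (hy : A.mulVec y = 0) : ∃ c : ℝ, y = c • x := by
  have hker' : Module.finrank ℝ (LinearMap.ker A.mulVecLin) = 1 := by
    have h := LinearMap.finrank_range_add_finrank_ker A.mulVecLin
    rw [Module.finrank_pi, Fintype.card_fin] at h
    have hr : Module.finrank ℝ (LinearMap.range A.mulVecLin) = n - 1 := hrank
    omega
  have hspan : Submodule.span ℝ {x} = LinearMap.ker A.mulVecLin := by
    apply Submodule.eq_of_le_of_finrank_le
    · rw [Submodule.span_le, Set.singleton_subset_iff]
      exact hker
    · rw [hker', finrank_span_singleton hx]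
  have : y ∈ Submodule.span ℝ {x} := hspan ▸ hy
  obtain ⟨c, hc⟩ := Submodule.mem_span_singleton.mp this
  exact ⟨c, hc.symm⟩

open Matrix Polynomial in
lemma trace_adjugate_aux {n : ℕ} (hn : 2 ≤ n) (A : Matrix (Fin n) (Fin n) ℝ)
    (hsymm : A.transpose = A) (hrank : A.rank = n - 1) :
    A.adjugate.trace = (A.charpoly.roots.filter (fun r => r ≠ 0)).prod := by
  have hA : A.IsHermitian := by
    rw [Matrix.IsHermitian, Matrix.conjTranspose_eq_transpose_of_trivial]; exact hsymm
  set U : Matrix (Fin n) (Fin n) ℝ := ↑hA.eigenvectorUnitary with hUdef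
  set d : Fin n → ℝ := hA.eigenvalues with hddef
  have hU2 : U * star U = 1 := Matrix.mem_unitaryGroup_iff.mp hA.eigenvectorUnitary.2
  have hU1 : star U * U = 1 := mul_eq_one_comm.mp hU2
  have hspec : A = U * Matrix.diagonal d * star U := by
    have h := hA.spectral_theorem
    have hid : (RCLike.ofReal ∘ d : Fin n → ℝ) = d := funext fun i => rfl
    rw [hid] at h
    exact h
  -- unique zero eigenvalue
  have hcard : Fintype.card {i // d i ≠ 0} = n - 1 := by
    rw [← hA.rank_eq_card_non_zero_eigs]; exact hrank
  have hcard0 : Fintype.card {i // d i = 0} = 1 := by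
    have h := Fintype.card_subtype_compl (fun i => d i ≠ 0)
    simp only [not_not] at h
    rw [h, hcard, Fintype.card_fin]; omega
  obtain ⟨⟨k, hk⟩, huniq⟩ := Fintype.card_eq_one_iff.mp hcard0
  have hk' : ∀ j, d j = 0 → j = k := fun j hj => congrArg Subtype.val (huniq ⟨j, hj⟩)
  -- charpoly roots
  have hD : (Matrix.diagonal d).charpoly = ∏ i, (X - C (d i)) := by
    rw [Matrix.charpoly]
    have : charmatrix (Matrix.diagonal d) = Matrix.diagonal (fun i => X - C (d i)) := by
      ext i j
      by_cases h : i = j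
      · subst h; simp [charmatrix_apply_eq]
      · simp [charmatrix_apply_ne _ _ _ h, Matrix.diagonal_apply_ne _ h]
    rw [this, Matrix.det_diagonal]
  have hcp : A.charpoly = ∏ i, (X - C (d i)) := by
    conv_lhs => rw [hspec]
    rw [charpoly_conj_aux _ _ hU2, hD]
  have hroots : A.charpoly.roots = Finset.univ.val.map d := by
    rw [hcp, Finset.prod_eq_multiset_prod]
    have hmm : Multiset.map (fun i => X - C (d i)) Finset.univ.val
        = Multiset.map (fun a => X - C a) (Multiset.map d Finset.univ.val) := by
      rw [Multiset.map_map]; rfl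
    rw [hmm, Polynomial.roots_multiset_prod_X_sub_C]
  have halpha : (A.charpoly.roots.filter (fun r => r ≠ 0)).prod
      = ∏ j ∈ Finset.univ.erase k, d j := by
    rw [hroots, Multiset.filter_map]
    have hfil : Finset.univ.filter (fun i => d i ≠ 0) = Finset.univ.erase k := by
      ext i
      simp only [Finset.mem_filter, Finset.mem_erase, Finset.mem_univ, true_and, and_true]
      constructor
      · intro h h0; exact h (h0 ▸ hk)
      · intro h h0; exact h (hk' i h0)
    have : Multiset.filter ((fun r => r ≠ 0) ∘ d) Finset.univ.val
        = (Finset.univ.erase k).val := by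
      rw [← hfil]; rfl
    rw [this, Finset.prod_eq_multiset_prod]
  -- trace of adjugate
  have hadjA : A.adjugate = (star U).adjugate * ((Matrix.diagonal d).adjugate * U.adjugate) := by
    conv_lhs => rw [hspec]
    rw [Matrix.adjugate_mul_distrib, Matrix.adjugate_mul_distrib]
  have htr : A.adjugate.trace = (Matrix.diagonal d).adjugate.trace := by
    rw [hadjA, Matrix.trace_mul_comm, mul_assoc, ← Matrix.adjugate_mul_distrib, hU1,
      Matrix.adjugate_one, mul_one]
  rw [htr, halpha, Matrix.adjugate_diagonal, Matrix.trace_diagonal]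
  apply Finset.sum_eq_single_of_mem k (Finset.mem_univ k)
  intro i _ hik
  exact Finset.prod_eq_zero (Finset.mem_erase.mpr ⟨Ne.symm hik, Finset.mem_univ k⟩) hk

/-- For a real symmetric matrix of nullity one, the adjugate is `α • x xᵀ` where `x` is a
unit kernel vector and `α` is the product of the nonzero eigenvalues. -/
theorem stmt_8 {n : ℕ} (hn : 2 ≤ n) (A : Matrix (Fin n) (Fin n) ℝ)
    (hsymm : A.transpose = A) (hrank : A.rank = n - 1)
    (x : Fin n → ℝ) (hker : A.mulVec x = 0) (hx : x ≠ 0)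
    (hunit : dotProduct x x = 1) :
    A.adjugate = (A.charpoly.roots.filter (fun r => r ≠ 0)).prod • Matrix.vecMulVec x x := by
  have hspan : ∀ y : Fin n → ℝ, A.mulVec y = 0 → ∃ c : ℝ, y = c • x :=
    ker_span_aux A (by omega) hrank x hker hx
  have main : A.adjugate = A.adjugate.trace • Matrix.vecMulVec x x := by
    have hdet : A.det = 0 := by
      rw [← Matrix.exists_mulVec_eq_zero_iff]
      exact ⟨x, hx, hker⟩
    have hAadj : A * A.adjugate = 0 := by
      rw [Matrix.mul_adjugate, hdet, zero_smul]
    have hcol : ∀ i, ∃ c : ℝ, (fun j => A.adjugate j i) = c • x := by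
      intro i
      apply hspan
      have : A.mulVec (A.adjugate.mulVec (Pi.single i 1)) = 0 := by
        rw [Matrix.mulVec_mulVec, hAadj, Matrix.zero_mulVec]
      exact (by simpa [Matrix.mulVec_single] using this : A.mulVec (A.adjugate.col i) = 0)
    choose c hc using hcol
    have hcc : ∀ i j, A.adjugate j i = c i * x j := by
      intro i j
      have := congrFun (hc i) j
      simpa using this
    have hadjsymm : ∀ i j, A.adjugate i j = A.adjugate j i := by
      intro i j
      conv_lhs => rw [← hsymm, ← Matrix.adjugate_transpose]
      rfl
    obtain ⟨i0, hi0⟩ : ∃ i, x i ≠ 0 := Function.ne_iff.mp hx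
    have hcx : ∀ i, c i = (c i0 / x i0) * x i := by
      intro i
      have h1 : c i * x i0 = c i0 * x i := by
        rw [← hcc i i0, hadjsymm i0 i, hcc i0 i]
      field_simp
      linarith [h1]
    have hentry : ∀ i j, A.adjugate i j = (c i0 / x i0) * (x i * x j) := by
      intro i j
      rw [hadjsymm i j, hcc i j, hcx i]
      ring
    have htrace : A.adjugate.trace = c i0 / x i0 := by
      unfold Matrix.trace
      simp only [Matrix.diag]
      calc ∑ i, A.adjugate i i = ∑ i, (c i0 / x i0) * (x i * x i) := by
            exact Finset.sum_congr rfl fun i _ => hentry i i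
        _ = (c i0 / x i0) * ∑ i, x i * x i := by rw [Finset.mul_sum]
        _ = c i0 / x i0 := by rw [show ∑ i, x i * x i = 1 from hunit, mul_one]
    ext i j
    rw [htrace]
    simp [Matrix.vecMulVec_apply, hentry i j]
  rw [trace_adjugate_aux hn A hsymm hrank] at main
  exact main
end

section
/- If a graph G is non-singular (its adjacency matrix A is invertible), then the canonical double cover of G is also non-singular, and moreover if A⁻¹ has the same zero/nonzero pattern as the adjacency matrix of some graph isomorphic to G, then the inverse of the adjacency matrix of the canonical double cover has the same zero/nonzero pattern as the adjacency matrix of a graph isomorphic to the canonical double cover of G. -/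
/-- The canonical double cover of a simple graph. -/
def canonicalDoubleCover {V : Type*} (G : SimpleGraph V) : SimpleGraph (V × Bool) where
  Adj a b := G.Adj a.1 b.1 ∧ a.2 ≠ b.2
  symm := ⟨fun _ _ h => ⟨h.1.symm, h.2.symm⟩⟩
  loopless := ⟨fun _ h => h.2 rfl⟩

instance {V : Type*} (G : SimpleGraph V) [DecidableRel G.Adj] :
    DecidableRel (canonicalDoubleCover G).Adj :=
  fun a b => inferInstanceAs (Decidable (G.Adj a.1 b.1 ∧ a.2 ≠ b.2))

/-- If `G` is non-singular then so is its canonical double cover, and if the zero/nonzero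
pattern of `A⁻¹` is the adjacency pattern of a graph isomorphic to `G`, then the pattern of
the inverse of the double cover's adjacency matrix is the adjacency pattern of a graph
isomorphic to the double cover. -/
theorem stmt_12 {n : ℕ} (G : SimpleGraph (Fin n)) [DecidableRel G.Adj]
    (hA : IsUnit (G.adjMatrix ℝ)) :
    IsUnit ((canonicalDoubleCover G).adjMatrix ℝ) ∧
    ((∃ H : SimpleGraph (Fin n), Nonempty (G ≃g H) ∧
        ∀ u v, (G.adjMatrix ℝ)⁻¹ u v ≠ 0 ↔ H.Adj u v) →
      ∃ H' : SimpleGraph (Fin n × Bool), Nonempty (canonicalDoubleCover G ≃g H') ∧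
        ∀ a b, ((canonicalDoubleCover G).adjMatrix ℝ)⁻¹ a b ≠ 0 ↔ H'.Adj a b) := by
  classical
  set A := G.adjMatrix ℝ with hAdef
  set C : Matrix (Fin n × Bool) (Fin n × Bool) ℝ :=
    fun a b => if a.2 ≠ b.2 then A⁻¹ a.1 b.1 else 0 with hCdef
  have hB : ∀ a b : Fin n × Bool, (canonicalDoubleCover G).adjMatrix ℝ a b
      = if a.2 ≠ b.2 then A a.1 b.1 else 0 := by
    intro a b
    by_cases h : a.2 = b.2 <;>
      (rw [SimpleGraph.adjMatrix_apply]; simp [SimpleGraph.adjMatrix_apply, canonicalDoubleCover, h, hAdef])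
  have hAinv : A * A⁻¹ = 1 := Matrix.mul_nonsing_inv _ ((Matrix.isUnit_iff_isUnit_det _).mp hA)
  have hmul : (canonicalDoubleCover G).adjMatrix ℝ * C = 1 := by
    ext ⟨u, i⟩ ⟨v, j⟩
    rw [Matrix.mul_apply]
    simp only [hB, hCdef]
    rw [Fintype.sum_prod_type]
    by_cases hij : i = j
    · subst hij
      have : ∀ w : Fin n, (∑ k : Bool,
          (if i ≠ k then A u w else 0) * (if k ≠ i then A⁻¹ w v else 0))
          = A u w * A⁻¹ w v := by
        intro w
        cases i <;> simp
      simp only [this]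
      have := congrFun (congrFun hAinv u) v
      rw [Matrix.mul_apply] at this
      rw [this]
      by_cases huv : u = v <;> simp [Matrix.one_apply, huv, Prod.ext_iff]
    · have : ∀ w : Fin n, (∑ k : Bool,
          (if i ≠ k then A u w else 0) * (if k ≠ j then A⁻¹ w v else 0)) = 0 := by
        intro w
        cases i <;> cases j <;> simp_all
      simp only [this, Finset.sum_const_zero]
      simp [Matrix.one_apply, Prod.ext_iff, hij]
  have hUnit : IsUnit ((canonicalDoubleCover G).adjMatrix ℝ) :=
    (Matrix.isUnit_iff_isUnit_det _).mpr (Matrix.isUnit_det_of_right_inverse hmul)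
  have hinv : ((canonicalDoubleCover G).adjMatrix ℝ)⁻¹ = C :=
    Matrix.inv_eq_right_inv hmul
  refine ⟨hUnit, ?_⟩
  rintro ⟨H, ⟨e⟩, hH⟩
  refine ⟨canonicalDoubleCover H, ⟨⟨Equiv.prodCongr e.toEquiv (Equiv.refl Bool), ?_⟩⟩, ?_⟩
  · intro a b
    simp [canonicalDoubleCover, e.map_rel_iff]
  · intro a b
    rw [hinv]
    by_cases h : a.2 = b.2
    · simp [hCdef, h, canonicalDoubleCover]
    · simp [hCdef, h, canonicalDoubleCover, hH]
end

section
/- Let G be a simple connected 3-regular graph whose adjacency matrix A is invertible. Then every column of A⁻¹ has at least 4 nonzero entries. -/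
/-!
Let `c` be the column of `A⁻¹` at `v`, so that `∑_{x ∼ u} c x = [u = v]` for every vertex `u`.
Summing over `u` and using regularity gives `3 ∑ c = 1`. Every `x` in the support `S` of `c` has
a neighbour `u ≠ v`, and `N(u)` is a zero-sum set containing `x`. If `|S| ≤ 3`, the support of
`N(u)` is neither `{x}` nor `S` (whose sum is `1/3`), so it is a pair `{x, y}` with
`c y = -c x`. On at most three points this forces `c` to take the values `s, s, -s` on `S`, with
`s = 1/3`, so no set of vertices has `c`-sum `1`; but `N(v)` does.
-/

open Finset Matrix

section ZeroSums

variable {ι : Type*} [Fintype ι] [DecidableEq ι]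

theorem exists_ne_eq_neg_of_sum_eq_zero {M : Type*} [AddCommGroup M] [DecidableEq M]
    {c : ι → M} (hS : #{i | c i ≠ 0} ≤ 3) (htot : ∑ i, c i ≠ 0) {T : Finset ι}
    (hT : ∑ i ∈ T, c i = 0) {x : ι} (hxT : x ∈ T) (hx : c x ≠ 0) : ∃ y ≠ x, c y = -c x := by
  set T' := {i ∈ T | c i ≠ 0}
  have hxT' : x ∈ T' := mem_filter.2 ⟨hxT, hx⟩
  have hrest : ∑ i ∈ T'.erase x, c i = -c x := by
    rw [eq_neg_iff_add_eq_zero, add_comm, add_sum_erase _ _ hxT', sum_filter_ne_zero, hT]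
  have hne : (T'.erase x).Nonempty :=
    nonempty_of_sum_ne_zero (by rw [hrest]; exact neg_ne_zero.2 hx)
  obtain hle | hlt := le_or_gt #(T'.erase x) 1
  · obtain ⟨y, hy⟩ := card_eq_one.1 (le_antisymm hle hne.card_pos)
    refine ⟨y, (mem_erase.1 (hy ▸ mem_singleton_self y)).1, ?_⟩
    rwa [hy, sum_singleton] at hrest
  · -- otherwise `T'` is the whole support, whose sum is not zero
    have hsub : T' ⊆ ({i | c i ≠ 0} : Finset ι) := fun i hi =>
      mem_filter.2 ⟨mem_univ _, (mem_filter.1 hi).2⟩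
    have hcard := card_erase_add_one hxT'
    have hT'S := eq_of_subset_of_card_le hsub (by omega)
    refine absurd ?_ htot
    rw [← sum_filter_ne_zero, ← hT'S, sum_filter_ne_zero, hT]

variable {K : Type*} [Field K] [LinearOrder K] [IsStrictOrderedRing K]

theorem posPart_add_posPart_add_posPart_le {a b c : K} (ha : b = -a ∨ c = -a)
    (hb : a = -b ∨ c = -b) (hc : a = -c ∨ b = -c) (hpos : 0 < a + b + c) :
    a⁺ + b⁺ + c⁺ ≤ 2 * (a + b + c) := by
  simp only [posPart, max_def]
  rcases ha with ha | ha <;> rcases hb with hb | hb <;> rcases hc with hc | hc <;>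
    split_ifs <;> linarith

theorem sum_posPart_le_two_mul_sum {c : ι → K} (hS : #{i | c i ≠ 0} ≤ 3)
    (hpartner : ∀ x, c x ≠ 0 → ∃ y ≠ x, c y = -c x) (hpos : 0 < ∑ i, c i) :
    ∑ i, (c i)⁺ ≤ 2 * ∑ i, c i := by
  set S : Finset ι := {i | c i ≠ 0}
  have hmem {y : ι} : y ∈ S ↔ c y ≠ 0 := by simp [S]
  have hsum : ∑ i, c i = ∑ i ∈ S, c i := (sum_filter_ne_zero _).symm
  have hsum_pos : ∑ i, (c i)⁺ = ∑ i ∈ S, (c i)⁺ :=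
    (sum_subset (subset_univ S) fun i _ hi => by rw [not_not.1 (mt hmem.2 hi), posPart_zero]).symm
  have hpartnerS : ∀ x ∈ S, ∃ y ∈ S, y ≠ x ∧ c y = -c x := fun x hx => by
    obtain ⟨y, hyx, hy⟩ := hpartner x (hmem.1 hx)
    exact ⟨y, hmem.2 (hy ▸ neg_ne_zero.2 (hmem.1 hx)), hyx, hy⟩
  rw [hsum] at hpos
  rw [hsum_pos, hsum]
  obtain h0 | h1 | h2 | h3 : #S = 0 ∨ #S = 1 ∨ #S = 2 ∨ #S = 3 := by omega
  · simp [card_eq_zero.1 h0] at hpos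
  · obtain ⟨x, hS⟩ := card_eq_one.1 h1
    obtain ⟨y, hy, hyx, -⟩ := hpartnerS x (by simp [hS])
    exact absurd (by simpa [hS] using hy) hyx
  · obtain ⟨x, y, hxy, hS⟩ := card_eq_two.1 h2
    obtain ⟨z, hz, hzx, hcz⟩ := hpartnerS x (by simp [hS])
    obtain rfl : z = y := by simpa [hS, hzx] using hz
    simp [hS, sum_pair hxy, hcz] at hpos
  · obtain ⟨x, y, z, hxy, hxz, hyz, hS⟩ := card_eq_three.1 h3
    have hpartner3 : ∀ w ∈ S, ∀ w₁ w₂, S = {w, w₁, w₂} → c w₁ = -c w ∨ c w₂ = -c w := by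
      intro w hw w₁ w₂ hSw
      obtain ⟨u, hu, huw, hcu⟩ := hpartnerS w hw
      simp only [hSw, mem_insert, mem_singleton, huw, false_or] at hu
      rcases hu with rfl | rfl <;> simp [hcu]
    have hsum3 (f : ι → K) : ∑ i ∈ S, f i = f x + f y + f z := by
      rw [hS, sum_insert (by simp [hxy, hxz]), sum_insert (by simp [hyz]), sum_singleton,
        add_assoc]
    simp only [hsum3] at hpos ⊢
    refine posPart_add_posPart_add_posPart_le (hpartner3 x (by simp [hS]) y z hS)
      (hpartner3 y (by simp [hS]) x z ?_) (hpartner3 z (by simp [hS]) x y ?_) hpos <;>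
      rw [hS] <;> ext <;> simp only [mem_insert, mem_singleton] <;> tauto

theorem four_le_card_support_of_zero_sums {c : ι → K} {d : K} (hd : 3 ≤ d)
    (htot : d * ∑ i, c i = 1)
    (hzero : ∀ x, c x ≠ 0 → ∃ T : Finset ι, x ∈ T ∧ ∑ i ∈ T, c i = 0)
    (hone : ∃ T : Finset ι, ∑ i ∈ T, c i = 1) : 4 ≤ #{i | c i ≠ 0} := by
  by_contra! hS
  have hpos : 0 < ∑ i, c i := pos_of_mul_pos_right (htot ▸ one_pos) (by linarith)
  have hpartner : ∀ x, c x ≠ 0 → ∃ y ≠ x, c y = -c x := fun x hx => by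
    obtain ⟨T, hxT, hT⟩ := hzero x hx
    exact exists_ne_eq_neg_of_sum_eq_zero (by omega) hpos.ne' hT hxT hx
  have hupper := sum_posPart_le_two_mul_sum (by omega) hpartner hpos
  obtain ⟨T, hT⟩ := hone
  have hlower : 1 ≤ ∑ i, (c i)⁺ := hT ▸ (sum_le_sum fun i _ => le_posPart (c i)).trans
    (sum_le_sum_of_subset_of_nonneg (subset_univ T) fun i _ _ => posPart_nonneg (c i))
  nlinarith

end ZeroSums

namespace SimpleGraph

variable {V : Type*} [Fintype V] {G : SimpleGraph V} [DecidableRel G.Adj]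

theorem IsRegularOfDegree.sum_adjMatrix_mulVec {R : Type*} [Semiring R] {d : ℕ}
    (hreg : G.IsRegularOfDegree d) (c : V → R) :
    ∑ u, (G.adjMatrix R *ᵥ c) u = d * ∑ x, c x := by
  calc ∑ u, (G.adjMatrix R *ᵥ c) u = 1 ⬝ᵥ (G.adjMatrix R *ᵥ c) := by simp [dotProduct]
    _ = (1 ᵥ* G.adjMatrix R) ⬝ᵥ c := dotProduct_mulVec _ _ _
    _ = d * ∑ x, c x := by simp [dotProduct, hreg _, mul_sum]

theorem four_le_card_support_of_adjMatrix_mulVec_eq_single [DecidableEq V] {K : Type*} [Field K]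
    [LinearOrder K] [IsStrictOrderedRing K] {d : ℕ} (hreg : G.IsRegularOfDegree d) (hd : 3 ≤ d)
    {c : V → K} {v : V} (hc : G.adjMatrix K *ᵥ c = Pi.single v 1) : 4 ≤ #{x | c x ≠ 0} := by
  have hrow (u : V) : ∑ x ∈ G.neighborFinset u, c x = (Pi.single v 1 : V → K) u := by
    rw [← adjMatrix_mulVec_apply, hc]
  refine four_le_card_support_of_zero_sums (d := d) (by exact_mod_cast hd) ?_ ?_
    ⟨_, (hrow v).trans (Pi.single_eq_same _ _)⟩
  · rw [← hreg.sum_adjMatrix_mulVec, hc, sum_pi_single']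
    simp
  · intro x _
    obtain ⟨u, hu, huv⟩ := exists_mem_ne (s := G.neighborFinset x)
      (by rw [card_neighborFinset_eq_degree, hreg x]; omega) v
    refine ⟨G.neighborFinset u, ?_, (hrow u).trans (Pi.single_eq_of_ne huv _)⟩
    exact (G.mem_neighborFinset u x).2 ((G.mem_neighborFinset x u).1 hu).symm

end SimpleGraph

open Finset in
theorem stmt_13_general {n : ℕ} (G : SimpleGraph (Fin n)) [DecidableRel G.Adj]
    (hreg : G.IsRegularOfDegree 3)
    (hA : IsUnit (G.adjMatrix ℝ)) :
    ∀ v : Fin n, 4 ≤ (univ.filter fun u : Fin n => (G.adjMatrix ℝ)⁻¹ u v ≠ 0).card := by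
  intro v
  have hcol : G.adjMatrix ℝ *ᵥ (fun u => (G.adjMatrix ℝ)⁻¹ u v) = Pi.single v 1 := by
    rw [show (fun u => (G.adjMatrix ℝ)⁻¹ u v) = (G.adjMatrix ℝ)⁻¹ *ᵥ Pi.single v 1 by ext; simp,
      mulVec_mulVec, mul_nonsing_inv _ ((isUnit_iff_isUnit_det _).1 hA), one_mulVec]
  exact SimpleGraph.four_le_card_support_of_adjMatrix_mulVec_eq_single hreg le_rfl hcol

open Finset in
/-- For a connected 3-regular graph with invertible adjacency matrix `A`, every column of
`A⁻¹` has at least 4 nonzero entries. -/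
theorem stmt_13 {n : ℕ} (G : SimpleGraph (Fin n)) [DecidableRel G.Adj]
    (hconn : G.Connected) (hreg : G.IsRegularOfDegree 3)
    (hA : IsUnit (G.adjMatrix ℝ)) :
    ∀ v : Fin n, 4 ≤ (univ.filter fun u : Fin n => (G.adjMatrix ℝ)⁻¹ u v ≠ 0).card :=
  stmt_13_general G hreg hA
end

section
/- There is no simple connected 3-regular graph G such that the zero/nonzero pattern of the inverse of its adjacency matrix equals the adjacency pattern of a graph isomorphic to G. In particular, no 3-regular graph is conduction-isomorphic. -/
open Finset

lemma stmt14_aux (P Q R : Prop) [Decidable P] [Decidable Q] [Decidable R] (p q r : ℝ)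
    (h : (if P then (1:ℝ) else 0) * p + (if Q then (1:ℝ) else 0) * q +
      (if R then (1:ℝ) else 0) * r = 0)
    (hq : q ≠ 0) (hr : r ≠ 0) (hqr : q + r ≠ 0) (hpqr : p + q + r ≠ 0) :
    (if Q then (1:ℝ) else 0) + (if R then (1:ℝ) else 0) ≤ (if P then (1:ℝ) else 0) := by
  split_ifs at h ⊢ <;> norm_num at h ⊢ <;>
    first
      | linarith
      | (exact hq h)
      | (exact hr h)
      | (exact hqr (by linarith))
      | (exact hpqr (by linarith))

lemma stmt14_count {n : ℕ} (v : Fin n) (D W : Fin n → ℝ)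
    (hsum : ∑ u, D u = 9) (hW : ∑ u, W u = 3)
    (hbound : ∀ t, t ≠ v → D t ≤ 2 * W t)
    (hfin : D v + 2 * (3 - W v) < 9) : False := by
  have h1 : ∑ u ∈ Finset.univ.erase v, D u = 9 - D v := by
    rw [Finset.sum_erase_eq_sub (Finset.mem_univ v), hsum]
  have h2 : ∑ u ∈ Finset.univ.erase v, W u = 3 - W v := by
    rw [Finset.sum_erase_eq_sub (Finset.mem_univ v), hW]
  have h3 : ∑ u ∈ Finset.univ.erase v, D u ≤ ∑ u ∈ Finset.univ.erase v, (2 * W u) :=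
    Finset.sum_le_sum fun t ht => hbound t (Finset.ne_of_mem_erase ht)
  rw [← Finset.mul_sum, h2] at h3
  linarith

/-- No simple connected 3-regular graph is conduction-isomorphic: the zero/nonzero pattern
of the inverse of its adjacency matrix is never the adjacency pattern of a graph
isomorphic to `G`. -/
theorem stmt_14 {n : ℕ} (G : SimpleGraph (Fin n)) [DecidableRel G.Adj]
    (hconn : G.Connected) (hreg : G.IsRegularOfDegree 3)
    (hA : IsUnit (G.adjMatrix ℝ)) :
    ¬ ∃ H : SimpleGraph (Fin n), Nonempty (G ≃g H) ∧
        ∀ u v, (G.adjMatrix ℝ)⁻¹ u v ≠ 0 ↔ H.Adj u v := by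
  rintro ⟨H, ⟨φ⟩, hB⟩
  letI : DecidableRel H.Adj := Classical.decRel _
  have hdet : IsUnit (G.adjMatrix ℝ).det := (Matrix.isUnit_iff_isUnit_det _).mp hA
  have hABmul : G.adjMatrix ℝ * (G.adjMatrix ℝ)⁻¹ = 1 := Matrix.mul_nonsing_inv _ hdet
  obtain ⟨v⟩ := hconn.nonempty
  have hdegH : (H.neighborFinset v).card = 3 := by
    have e := φ.mapNeighborSet (φ.symm v)
    rw [φ.apply_symm_apply] at e
    rw [SimpleGraph.card_neighborFinset_eq_degree, ← SimpleGraph.card_neighborSet_eq_degree,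
      ← Fintype.card_congr e, SimpleGraph.card_neighborSet_eq_degree]
    exact hreg _
  obtain ⟨a, b, c, hab, hac, hbc, hS⟩ := Finset.card_eq_three.mp hdegH
  have hmem : ∀ w, (G.adjMatrix ℝ)⁻¹ w v ≠ 0 ↔ w ∈ ({a, b, c} : Finset (Fin n)) := by
    intro w
    rw [← hS, SimpleGraph.mem_neighborFinset]
    exact (hB w v).trans (H.adj_comm w v)
  have hxa : (G.adjMatrix ℝ)⁻¹ a v ≠ 0 := (hmem a).mpr (by simp)
  have hxb : (G.adjMatrix ℝ)⁻¹ b v ≠ 0 := (hmem b).mpr (by simp)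
  have hxc : (G.adjMatrix ℝ)⁻¹ c v ≠ 0 := (hmem c).mpr (by simp)
  have E1 : ∀ u, (if G.Adj u a then (1:ℝ) else 0) * (G.adjMatrix ℝ)⁻¹ a v
      + (if G.Adj u b then (1:ℝ) else 0) * (G.adjMatrix ℝ)⁻¹ b v
      + (if G.Adj u c then (1:ℝ) else 0) * (G.adjMatrix ℝ)⁻¹ c v
      = if u = v then 1 else 0 := by
    intro u
    have h1 := congrFun (congrFun hABmul u) v
    rw [Matrix.mul_apply, Matrix.one_apply] at h1
    have h2 : ∑ w, G.adjMatrix ℝ u w * (G.adjMatrix ℝ)⁻¹ w v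
        = ∑ w ∈ ({a,b,c} : Finset (Fin n)), G.adjMatrix ℝ u w * (G.adjMatrix ℝ)⁻¹ w v := by
      refine (Finset.sum_subset (Finset.subset_univ _) fun w _ hw => ?_).symm
      have hw0 : (G.adjMatrix ℝ)⁻¹ w v = 0 := by
        by_contra h0; exact hw ((hmem w).mp h0)
      rw [hw0, mul_zero]
    rw [h2] at h1
    rw [Finset.sum_insert (by simp [hab, hac]), Finset.sum_insert (by simp [hbc]),
      Finset.sum_singleton] at h1
    simpa [SimpleGraph.adjMatrix_apply, add_assoc] using h1
  have colsum : ∀ z : Fin n, ∑ u, (if G.Adj u z then (1:ℝ) else 0) = 3 := by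
    intro z
    rw [Finset.sum_boole]
    have hfe : (Finset.univ.filter fun u => G.Adj u z) = G.neighborFinset z := by
      ext w; simp [SimpleGraph.mem_neighborFinset, G.adj_comm]
    rw [hfe, SimpleGraph.card_neighborFinset_eq_degree, hreg z]
    norm_num
  have E2 : (G.adjMatrix ℝ)⁻¹ a v + (G.adjMatrix ℝ)⁻¹ b v + (G.adjMatrix ℝ)⁻¹ c v = 1/3 := by
    have hsum := Finset.sum_congr rfl (fun u (_ : u ∈ Finset.univ) => E1 u)
    rw [Finset.sum_ite_eq' Finset.univ v (fun _ => (1:ℝ))] at hsum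
    rw [Finset.sum_add_distrib, Finset.sum_add_distrib, ← Finset.sum_mul, ← Finset.sum_mul,
      ← Finset.sum_mul, colsum a, colsum b, colsum c] at hsum
    simp at hsum
    linarith
  have Ev := E1 v
  rw [if_pos rfl] at Ev
  by_cases hva : G.Adj v a <;> by_cases hvb : G.Adj v b <;> by_cases hvc : G.Adj v c
  · -- all three
    simp [hva, hvb, hvc] at Ev
    linarith
  · -- a, b, not c : z = c
    simp [hva, hvb, hvc] at Ev
    refine stmt14_count v
      (fun u => (if G.Adj u a then (1:ℝ) else 0) + (if G.Adj u b then (1:ℝ) else 0)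
        + (if G.Adj u c then (1:ℝ) else 0))
      (fun u => if G.Adj u c then (1:ℝ) else 0) ?_ (colsum c) ?_ ?_
    · rw [Finset.sum_add_distrib, Finset.sum_add_distrib, colsum a, colsum b, colsum c]; norm_num
    · intro t ht
      have h := E1 t
      rw [if_neg ht] at h
      have key := stmt14_aux (G.Adj t c) (G.Adj t a) (G.Adj t b)
        ((G.adjMatrix ℝ)⁻¹ c v) ((G.adjMatrix ℝ)⁻¹ a v) ((G.adjMatrix ℝ)⁻¹ b v)
        (by linarith) hxa hxb (by intro h0; linarith) (by intro h0; linarith)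
      linarith [key]
    · simp [hva, hvb, hvc]; norm_num
  · -- a, not b, c : z = b
    simp [hva, hvb, hvc] at Ev
    refine stmt14_count v
      (fun u => (if G.Adj u a then (1:ℝ) else 0) + (if G.Adj u b then (1:ℝ) else 0)
        + (if G.Adj u c then (1:ℝ) else 0))
      (fun u => if G.Adj u b then (1:ℝ) else 0) ?_ (colsum b) ?_ ?_
    · rw [Finset.sum_add_distrib, Finset.sum_add_distrib, colsum a, colsum b, colsum c]; norm_num
    · intro t ht
      have h := E1 t
      rw [if_neg ht] at h
      have key := stmt14_aux (G.Adj t b) (G.Adj t a) (G.Adj t c)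
        ((G.adjMatrix ℝ)⁻¹ b v) ((G.adjMatrix ℝ)⁻¹ a v) ((G.adjMatrix ℝ)⁻¹ c v)
        (by linarith) hxa hxc (by intro h0; linarith) (by intro h0; linarith)
      linarith [key]
    · simp [hva, hvb, hvc]; norm_num
  · -- a only : z = a
    simp [hva, hvb, hvc] at Ev
    refine stmt14_count v
      (fun u => (if G.Adj u a then (1:ℝ) else 0) + (if G.Adj u b then (1:ℝ) else 0)
        + (if G.Adj u c then (1:ℝ) else 0))
      (fun u => if G.Adj u a then (1:ℝ) else 0) ?_ (colsum a) ?_ ?_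
    · rw [Finset.sum_add_distrib, Finset.sum_add_distrib, colsum a, colsum b, colsum c]; norm_num
    · intro t ht
      have h := E1 t
      rw [if_neg ht] at h
      have key := stmt14_aux (G.Adj t a) (G.Adj t b) (G.Adj t c)
        ((G.adjMatrix ℝ)⁻¹ a v) ((G.adjMatrix ℝ)⁻¹ b v) ((G.adjMatrix ℝ)⁻¹ c v)
        (by linarith) hxb hxc (by intro h0; linarith) (by intro h0; linarith)
      linarith [key]
    · simp [hva, hvb, hvc]; norm_num
  · -- not a, b, c : z = a
    simp [hva, hvb, hvc] at Ev
    refine stmt14_count v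
      (fun u => (if G.Adj u a then (1:ℝ) else 0) + (if G.Adj u b then (1:ℝ) else 0)
        + (if G.Adj u c then (1:ℝ) else 0))
      (fun u => if G.Adj u a then (1:ℝ) else 0) ?_ (colsum a) ?_ ?_
    · rw [Finset.sum_add_distrib, Finset.sum_add_distrib, colsum a, colsum b, colsum c]; norm_num
    · intro t ht
      have h := E1 t
      rw [if_neg ht] at h
      have key := stmt14_aux (G.Adj t a) (G.Adj t b) (G.Adj t c)
        ((G.adjMatrix ℝ)⁻¹ a v) ((G.adjMatrix ℝ)⁻¹ b v) ((G.adjMatrix ℝ)⁻¹ c v)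
        (by linarith) hxb hxc (by intro h0; linarith) (by intro h0; linarith)
      linarith [key]
    · simp [hva, hvb, hvc]; norm_num
  · -- b only : z = b
    simp [hva, hvb, hvc] at Ev
    refine stmt14_count v
      (fun u => (if G.Adj u a then (1:ℝ) else 0) + (if G.Adj u b then (1:ℝ) else 0)
        + (if G.Adj u c then (1:ℝ) else 0))
      (fun u => if G.Adj u b then (1:ℝ) else 0) ?_ (colsum b) ?_ ?_
    · rw [Finset.sum_add_distrib, Finset.sum_add_distrib, colsum a, colsum b, colsum c]; norm_num
    · intro t ht
      have h := E1 t
      rw [if_neg ht] at h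
      have key := stmt14_aux (G.Adj t b) (G.Adj t a) (G.Adj t c)
        ((G.adjMatrix ℝ)⁻¹ b v) ((G.adjMatrix ℝ)⁻¹ a v) ((G.adjMatrix ℝ)⁻¹ c v)
        (by linarith) hxa hxc (by intro h0; linarith) (by intro h0; linarith)
      linarith [key]
    · simp [hva, hvb, hvc]; norm_num
  · -- c only : z = c
    simp [hva, hvb, hvc] at Ev
    refine stmt14_count v
      (fun u => (if G.Adj u a then (1:ℝ) else 0) + (if G.Adj u b then (1:ℝ) else 0)
        + (if G.Adj u c then (1:ℝ) else 0))
      (fun u => if G.Adj u c then (1:ℝ) else 0) ?_ (colsum c) ?_ ?_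
    · rw [Finset.sum_add_distrib, Finset.sum_add_distrib, colsum a, colsum b, colsum c]; norm_num
    · intro t ht
      have h := E1 t
      rw [if_neg ht] at h
      have key := stmt14_aux (G.Adj t c) (G.Adj t a) (G.Adj t b)
        ((G.adjMatrix ℝ)⁻¹ c v) ((G.adjMatrix ℝ)⁻¹ a v) ((G.adjMatrix ℝ)⁻¹ b v)
        (by linarith) hxa hxb (by intro h0; linarith) (by intro h0; linarith)
      linarith [key]
    · simp [hva, hvb, hvc]; norm_num
  · -- none
    simp [hva, hvb, hvc] at Ev
end

section
/- For every integer k ≥ 2, the 4k×4k block matrix M = [[f(2k,1)+f(2k,−1), f(2k,0)],[f(2k,0), f(2k,1)]] is invertible with inverse M⁻¹ = [[f(2k,−1), −f(2k,−2)],[−f(2k,2), f(2k,1)+f(2k,3)]]. -/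
/-!
`f(n,a)` is the permutation matrix of `i ↦ i ± a`, the sign given by the parity of `i`. For even
`n`, the parity of `i ± a` is that of `i` flipped by that of `a`, so
`f(n,a) f(n,b) = f(n, a + b)` for even `a` and `f(n, a - b)` for odd `a`. Together with
`f(n,0) = 1`, this turns each block of both products into a signed sum of matrices `f(n,c)` that
cancels to `1` or `0`.
-/

/-- The matrix `f(n,a)`: row `i` has a single 1, in column `i+a` if `i` is even and in
column `i-a` if `i` is odd (indices mod `n`). -/
def fMat (n : ℕ) (a : ℤ) : Matrix (ZMod n) (ZMod n) ℝ :=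
  Matrix.of fun i j =>
    if (Even i.val ∧ j = i + (a : ZMod n)) ∨ (¬ Even i.val ∧ j = i - (a : ZMod n)) then 1 else 0

open Matrix

namespace Matrix

theorem of_ite_eq_mul_of_ite_eq {ι R : Type*} [Fintype ι] [DecidableEq ι] [NonAssocSemiring R]
    (σ τ : ι → ι) :
    (of fun i j => if j = σ i then 1 else 0 : Matrix ι ι R) *
        of (fun i j => if j = τ i then 1 else 0) =
      of fun i j => if j = τ (σ i) then 1 else 0 := by
  ext i j
  simp only [mul_apply, of_apply, ite_mul, one_mul, zero_mul, Finset.sum_ite_eq',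
    Finset.mem_univ, if_true]

end Matrix

namespace ZMod

theorem even_val_iff_castHom_eq_zero {n : ℕ} [NeZero n] (hn : 2 ∣ n) (x : ZMod n) :
    Even x.val ↔ castHom hn (ZMod 2) x = 0 := by
  rw [castHom_apply, ← natCast_val, natCast_eq_zero_iff_even]

theorem even_val_add_intCast {n : ℕ} [NeZero n] (hn : 2 ∣ n) (x : ZMod n) (a : ℤ) :
    Even (x + a).val ↔ (Even x.val ↔ Even a) := by
  rw [even_val_iff_castHom_eq_zero hn, even_val_iff_castHom_eq_zero hn, map_add, map_intCast,
    ← intCast_eq_zero_iff_even]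
  generalize castHom hn (ZMod 2) x = u
  generalize (a : ZMod 2) = v
  revert u v
  decide

theorem even_val_sub_intCast {n : ℕ} [NeZero n] (hn : 2 ∣ n) (x : ZMod n) (a : ℤ) :
    Even (x - a).val ↔ (Even x.val ↔ Even a) := by
  rw [sub_eq_add_neg, ← Int.cast_neg, even_val_add_intCast hn, even_neg]

end ZMod

def fShift (n : ℕ) (a : ℤ) (i : ZMod n) : ZMod n :=
  if Even i.val then i + a else i - a

theorem fMat_eq (n : ℕ) (a : ℤ) : fMat n a = of fun i j => if j = fShift n a i then 1 else 0 := by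
  ext i j
  by_cases hi : Even i.val <;> simp [fMat, fShift, hi, -Nat.not_even_iff_odd]

theorem fShift_fShift {n : ℕ} [NeZero n] (hn : 2 ∣ n) (a b : ℤ) (i : ZMod n) :
    fShift n b (fShift n a i) = fShift n (if Even a then a + b else a - b) i := by
  by_cases hi : Even i.val <;> by_cases ha : Even a <;>
    simp [fShift, hi, ha, ZMod.even_val_add_intCast hn, ZMod.even_val_sub_intCast hn] <;> ring

theorem fMat_mul_fMat {n : ℕ} [NeZero n] (hn : 2 ∣ n) (a b : ℤ) :
    fMat n a * fMat n b = fMat n (if Even a then a + b else a - b) := by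
  simp only [fMat_eq, of_ite_eq_mul_of_ite_eq, fShift_fShift hn]

theorem fMat_zero (n : ℕ) : fMat n 0 = 1 := by
  ext i j
  simp [fMat_eq, fShift, one_apply, eq_comm]

theorem stmt_17_general (k : ℕ) [NeZero (2 * k)] :
    Matrix.fromBlocks (fMat (2 * k) 1 + fMat (2 * k) (-1)) (fMat (2 * k) 0)
        (fMat (2 * k) 0) (fMat (2 * k) 1) *
      Matrix.fromBlocks (fMat (2 * k) (-1)) (-(fMat (2 * k) (-2)))
        (-(fMat (2 * k) 2)) (fMat (2 * k) 1 + fMat (2 * k) 3) = 1 ∧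
    Matrix.fromBlocks (fMat (2 * k) (-1)) (-(fMat (2 * k) (-2)))
        (-(fMat (2 * k) 2)) (fMat (2 * k) 1 + fMat (2 * k) 3) *
      Matrix.fromBlocks (fMat (2 * k) 1 + fMat (2 * k) (-1)) (fMat (2 * k) 0)
        (fMat (2 * k) 0) (fMat (2 * k) 1) = 1 := by
  have hn : 2 ∣ 2 * k := dvd_mul_right 2 k
  constructor <;>
  · rw [fromBlocks_multiply, ← fromBlocks_one, fromBlocks_inj]
    simp only [add_mul, mul_add, neg_mul, mul_neg, fMat_mul_fMat hn]
    norm_num [fMat_zero] <;> abel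

/-- For `k ≥ 2`, the block matrix `[[f(2k,1)+f(2k,−1), f(2k,0)],[f(2k,0), f(2k,1)]]` is
invertible with inverse `[[f(2k,−1), −f(2k,−2)],[−f(2k,2), f(2k,1)+f(2k,3)]]`. -/
theorem stmt_17 (k : ℕ) (hk : 2 ≤ k) [NeZero (2 * k)] :
    Matrix.fromBlocks (fMat (2 * k) 1 + fMat (2 * k) (-1)) (fMat (2 * k) 0)
        (fMat (2 * k) 0) (fMat (2 * k) 1) *
      Matrix.fromBlocks (fMat (2 * k) (-1)) (-(fMat (2 * k) (-2)))
        (-(fMat (2 * k) 2)) (fMat (2 * k) 1 + fMat (2 * k) 3) = 1 ∧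
    Matrix.fromBlocks (fMat (2 * k) (-1)) (-(fMat (2 * k) (-2)))
        (-(fMat (2 * k) 2)) (fMat (2 * k) 1 + fMat (2 * k) 3) *
      Matrix.fromBlocks (fMat (2 * k) 1 + fMat (2 * k) (-1)) (fMat (2 * k) 0)
        (fMat (2 * k) 0) (fMat (2 * k) 1) = 1 :=
  stmt_17_general k
end

section
/- For every integer k ≥ 3, let P = P(k) be the k×k cyclic permutation matrix with P_{i,i−1} = 1 (indices mod k), and let J, I be the k×k all-ones and identity matrices. Then the 2k×2k block matrix M = [[J−I, J−I−P],[J−I−P⁻¹, J−I−P⁻¹−P]] is invertible with inverse M⁻¹ = [[−(J−I−P⁻¹−P), J−I−P],[J−I−P⁻¹, −(J−I)]]. -/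
/-!
The block product expands, block by block, into noncommutative polynomials in `J`, `P`, `P⁻¹`,
and the relations `J P = P J = J`, `P P⁻¹ = P⁻¹ P = 1` reduce each block to `I` or `0`.
Over a commutative ring a one-sided inverse of a square matrix is two-sided, which gives the
second product.
-/

/-- The cyclic permutation matrix `P(k)` with `P_{i,i-1} = 1` (indices mod `k`). -/
def cycPerm (k : ℕ) : Matrix (ZMod k) (ZMod k) ℝ :=
  Matrix.of fun i j => if j = i - 1 then 1 else 0

/-- The inverse cyclic permutation matrix with entries `P⁻¹_{i,i+1} = 1` (indices mod `k`). -/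
def cycPermInv (k : ℕ) : Matrix (ZMod k) (ZMod k) ℝ :=
  Matrix.of fun i j => if j = i + 1 then 1 else 0

/-- The all-ones matrix `J`. -/
def allOnes (k : ℕ) : Matrix (ZMod k) (ZMod k) ℝ := Matrix.of fun _ _ => 1

open Matrix

theorem Matrix.fromBlocks_mul_fromBlocks_eq_one {n R : Type*} [Fintype n] [DecidableEq n] [Ring R]
    {J P Q : Matrix n n R} (hJP : J * P = J) (hPJ : P * J = J) (hPQ : P * Q = 1)
    (hQP : Q * P = 1) :
    fromBlocks (J - 1) (J - 1 - P) (J - 1 - Q) (J - 1 - Q - P) *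
      fromBlocks (-(J - 1 - Q - P)) (J - 1 - P) (J - 1 - Q) (-(J - 1)) = 1 := by
  rw [fromBlocks_multiply, ← fromBlocks_one]
  congr 1 <;>
    · simp only [mul_sub, sub_mul, mul_neg, mul_one, one_mul, hJP, hPJ, hPQ, hQP]
      abel

section permMatrix

variable (k : ℕ)

lemma cycPerm_eq_permMatrix :
    cycPerm k = Equiv.Perm.permMatrix ℝ (Equiv.subRight (1 : ZMod k)) := by
  ext i j
  simp [cycPerm, PEquiv.toMatrix_apply, eq_comm]

lemma cycPermInv_eq_permMatrix :
    cycPermInv k = Equiv.Perm.permMatrix ℝ (Equiv.addRight (1 : ZMod k)) := by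
  ext i j
  simp [cycPermInv, PEquiv.toMatrix_apply, eq_comm]

variable [NeZero k]

lemma allOnes_mul_permMatrix (σ : Equiv.Perm (ZMod k)) :
    allOnes k * σ.permMatrix ℝ = allOnes k := by
  ext i j
  simp [allOnes, mul_apply, PEquiv.toMatrix_apply, ← Equiv.eq_symm_apply]

lemma permMatrix_mul_allOnes (σ : Equiv.Perm (ZMod k)) :
    σ.permMatrix ℝ * allOnes k = allOnes k := by
  ext i j
  simp [allOnes, mul_apply, PEquiv.toMatrix_apply]

lemma allOnes_mul_cycPerm : allOnes k * cycPerm k = allOnes k := by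
  rw [cycPerm_eq_permMatrix]
  exact allOnes_mul_permMatrix k _

lemma cycPerm_mul_allOnes : cycPerm k * allOnes k = allOnes k := by
  rw [cycPerm_eq_permMatrix]
  exact permMatrix_mul_allOnes k _

lemma cycPerm_mul_cycPermInv : cycPerm k * cycPermInv k = 1 := by
  rw [cycPerm_eq_permMatrix, cycPermInv_eq_permMatrix, ← permMatrix_mul]
  convert permMatrix_one
  ext
  simp

lemma cycPermInv_mul_cycPerm : cycPermInv k * cycPerm k = 1 :=
  mul_eq_one_comm.mp (cycPerm_mul_cycPermInv k)

end permMatrix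

theorem stmt_18_general (k : ℕ) [NeZero k] :
    Matrix.fromBlocks (allOnes k - 1) (allOnes k - 1 - cycPerm k)
        (allOnes k - 1 - cycPermInv k) (allOnes k - 1 - cycPermInv k - cycPerm k) *
      Matrix.fromBlocks (-(allOnes k - 1 - cycPermInv k - cycPerm k)) (allOnes k - 1 - cycPerm k)
        (allOnes k - 1 - cycPermInv k) (-(allOnes k - 1)) = 1 ∧
    Matrix.fromBlocks (-(allOnes k - 1 - cycPermInv k - cycPerm k)) (allOnes k - 1 - cycPerm k)
        (allOnes k - 1 - cycPermInv k) (-(allOnes k - 1)) *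
      Matrix.fromBlocks (allOnes k - 1) (allOnes k - 1 - cycPerm k)
        (allOnes k - 1 - cycPermInv k) (allOnes k - 1 - cycPermInv k - cycPerm k) = 1 := by
  have h := fromBlocks_mul_fromBlocks_eq_one (allOnes_mul_cycPerm k) (cycPerm_mul_allOnes k)
    (cycPerm_mul_cycPermInv k) (cycPermInv_mul_cycPerm k)
  exact ⟨h, mul_eq_one_comm.mp h⟩

/-- For `k ≥ 3`, the block matrix `[[J−I, J−I−P],[J−I−P⁻¹, J−I−P⁻¹−P]]` is invertible
with inverse `[[−(J−I−P⁻¹−P), J−I−P],[J−I−P⁻¹, −(J−I)]]`. -/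
theorem stmt_18 (k : ℕ) (hk : 3 ≤ k) [NeZero k] :
    Matrix.fromBlocks (allOnes k - 1) (allOnes k - 1 - cycPerm k)
        (allOnes k - 1 - cycPermInv k) (allOnes k - 1 - cycPermInv k - cycPerm k) *
      Matrix.fromBlocks (-(allOnes k - 1 - cycPermInv k - cycPerm k)) (allOnes k - 1 - cycPerm k)
        (allOnes k - 1 - cycPermInv k) (-(allOnes k - 1)) = 1 ∧
    Matrix.fromBlocks (-(allOnes k - 1 - cycPermInv k - cycPerm k)) (allOnes k - 1 - cycPerm k)
        (allOnes k - 1 - cycPermInv k) (-(allOnes k - 1)) *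
      Matrix.fromBlocks (allOnes k - 1) (allOnes k - 1 - cycPerm k)
        (allOnes k - 1 - cycPermInv k) (allOnes k - 1 - cycPermInv k - cycPerm k) = 1 :=
  stmt_18_general k
end
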